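/- Let G be a game with no cycle of total weight zero, let F be a set of vertices containing N = N_G such that the supΣ^N-value is finite on F, let H be the subgame obtained by removing F from G (assumed to be a subgame), let φ_H be a reducing potential for H, and assume H^+ = ZP_{φ_H} is empty and H^- = ZN_{φ_H} is nonempty. Let m be the maximal value of w(vv') + supΣ^N-value(v') − φ_H(v) over edges vv' from H^- ∩ V_Max to F (such edges exist). Call an edge vv' a good escape if it goes from H^- to F and satisfies w(vv') + supΣ^N-value(v') − φ_H(v) ≥ m. Let S be the set of vertices of H^- from which, in G, Max has a strategy ensuring that the play visits only edges of φ_H-modified weight ≥ 0 while remaining in H^-, and either stays forever in H^- or exits via a good escape. Then for every vertex v ∈ S we have supΣ^N-value(v) = m + φ_H(v). -/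

import Mathlib

/-!
Basic definitions for mean-payoff games: games, infinite paths, positional
strategies, the valuations MP, supΣ^X and infΣ^X, values of vertices,
zones N, P, ZN, ZP (also relative to a sub-arena), reduced games,
potentials and potential reductions, traps.
-/

/-- A game: a sinkless directed graph with integer weights, whose vertices are
partitioned into Min-vertices (`IsMin`) and Max-vertices (`¬ IsMin`). -/
structure MPGame (V : Type*) where
  E : V → V → Prop
  w : V → V → ℤ
  IsMin : V → Prop
  sinkless : ∀ v, ∃ v', E v v'

namespace MPGame

variable {V : Type*}

/-- An infinite path in a game. -/
structure Path (G : MPGame V) where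
  vert : ℕ → V
  adj : ∀ i, G.E (vert i) (vert (i + 1))

/-- The sum of the weights of the first `k` edges of a path. -/
def Path.wsum {G : MPGame V} (π : G.Path) (k : ℕ) : ℤ :=
  ∑ i ∈ Finset.range k, G.w (π.vert i) (π.vert (i + 1))

/-- The tail of a path (drop the first vertex). -/
def Path.tail {G : MPGame V} (π : G.Path) : G.Path :=
  ⟨fun i => π.vert (i + 1), fun i => π.adj (i + 1)⟩

/-- A positional strategy `σ : V → V` is legal if it always follows an edge. -/
def Legal (G : MPGame V) (σ : V → V) : Prop := ∀ v, G.E v (σ v)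

/-- Consistency of a path with a positional Min-strategy. -/
def Path.ConsMin {G : MPGame V} (π : G.Path) (σ : V → V) : Prop :=
  ∀ i, G.IsMin (π.vert i) → π.vert (i + 1) = σ (π.vert i)

/-- Consistency of a path with a positional Max-strategy. -/
def Path.ConsMax {G : MPGame V} (π : G.Path) (τ : V → V) : Prop :=
  ∀ i, ¬ G.IsMin (π.vert i) → π.vert (i + 1) = τ (π.vert i)

/-- The mean-payoff valuation `MP(π) = limsup_k (1/k) ∑_{i<k} w_i`. -/
noncomputable def MP {G : MPGame V} (π : G.Path) : EReal :=
  Filter.limsup (fun k => (((π.wsum k : ℝ) / (k : ℝ)) : EReal)) Filter.atTop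

/-- `supΣ^X(π) = sup_{k ≤ n_X} ∑_{i<k} w_i`, where `n_X` is the first hitting
time of `X` (all `k` if `X` is never hit). -/
noncomputable def supSigma {G : MPGame V} (X : Set V) (π : G.Path) : EReal :=
  ⨆ k : {k : ℕ // ∀ i < k, π.vert i ∉ X}, ((π.wsum k.1 : ℝ) : EReal)

/-- `infΣ^X(π) = inf_{k ≤ n_X} ∑_{i<k} w_i`. -/
noncomputable def infSigma {G : MPGame V} (X : Set V) (π : G.Path) : EReal :=
  ⨅ k : {k : ℕ // ∀ i < k, π.vert i ∉ X}, ((π.wsum k.1 : ℝ) : EReal)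

/-- `inf_σ sup_{π ⊨ σ, π from v} val(π)`, over legal positional Min-strategies. -/
noncomputable def minVal (G : MPGame V) (val : G.Path → EReal) (v : V) : EReal :=
  ⨅ σ : {σ : V → V // G.Legal σ},
    ⨆ π : {π : G.Path // π.vert 0 = v ∧ π.ConsMin σ.1}, val π.1

/-- `sup_τ inf_{π ⊨ τ, π from v} val(π)`, over legal positional Max-strategies. -/
noncomputable def maxVal (G : MPGame V) (val : G.Path → EReal) (v : V) : EReal :=
  ⨆ τ : {τ : V → V // G.Legal τ},
    ⨅ π : {π : G.Path // π.vert 0 = v ∧ π.ConsMax τ.1}, val π.1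

/-- The MP-value of a vertex. -/
noncomputable def MPval (G : MPGame V) (v : V) : EReal := G.minVal MP v

/-- The `supΣ^X`-value of a vertex. -/
noncomputable def supSigmaVal (G : MPGame V) (X : Set V) (v : V) : EReal :=
  G.minVal (supSigma X) v

/-- The `infΣ^X`-value of a vertex. -/
noncomputable def infSigmaVal (G : MPGame V) (X : Set V) (v : V) : EReal :=
  G.minVal (infSigma X) v

/-- `G` has no cycle of total weight zero: no path repeats a vertex with the
same partial sum of weights. -/
def NoZeroCycle (G : MPGame V) : Prop :=
  ∀ (π : G.Path) (i j : ℕ), i < j → π.vert i = π.vert j → π.wsum i ≠ π.wsum j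

/-- The zone `N` of the subgame of `G` induced on `D`: vertices whose
immediately optimal edges (within `D`) have weight `< 0`. -/
def NsetOn (G : MPGame V) (D : Set V) : Set V :=
  {v | v ∈ D ∧ ((G.IsMin v ∧ ∃ v' ∈ D, G.E v v' ∧ G.w v v' < 0) ∨
      (¬ G.IsMin v ∧ ∀ v' ∈ D, G.E v v' → G.w v v' < 0))}

/-- The zone `P` of the subgame of `G` induced on `D`. -/
def PsetOn (G : MPGame V) (D : Set V) : Set V :=
  {v | v ∈ D ∧ ((¬ G.IsMin v ∧ ∃ v' ∈ D, G.E v v' ∧ 0 < G.w v v') ∨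
      (G.IsMin v ∧ ∀ v' ∈ D, G.E v v' → 0 < G.w v v'))}

/-- The zone `N` of `G`. -/
def Nset (G : MPGame V) : Set V := G.NsetOn Set.univ

/-- The zone `P` of `G`. -/
def Pset (G : MPGame V) : Set V := G.PsetOn Set.univ

/-- The zone `ZN` of the subgame of `G` induced on `D`: vertices from which
Min can force that an edge of weight `< 0` is visited before any edge of
weight `> 0` (staying within `D`). -/
inductive ZNr (G : MPGame V) (D : Set V) : V → Prop
  | minNeg (v v' : V) : v ∈ D → G.IsMin v → v' ∈ D → G.E v v' → G.w v v' < 0 →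
      ZNr G D v
  | minZero (v v' : V) : v ∈ D → G.IsMin v → v' ∈ D → G.E v v' → G.w v v' = 0 →
      ZNr G D v' → ZNr G D v
  | max (v : V) : v ∈ D → ¬ G.IsMin v →
      (∀ v' ∈ D, G.E v v' → G.w v v' ≤ 0) →
      (∀ v', v' ∈ D → G.E v v' → G.w v v' = 0 → ZNr G D v') →
      ZNr G D v

/-- The zone `ZP` of the subgame of `G` induced on `D`. -/
inductive ZPr (G : MPGame V) (D : Set V) : V → Prop
  | maxPos (v v' : V) : v ∈ D → ¬ G.IsMin v → v' ∈ D → G.E v v' → 0 < G.w v v' →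
      ZPr G D v
  | maxZero (v v' : V) : v ∈ D → ¬ G.IsMin v → v' ∈ D → G.E v v' → G.w v v' = 0 →
      ZPr G D v' → ZPr G D v
  | min (v : V) : v ∈ D → G.IsMin v →
      (∀ v' ∈ D, G.E v v' → 0 ≤ G.w v v') →
      (∀ v', v' ∈ D → G.E v v' → G.w v v' = 0 → ZPr G D v') →
      ZPr G D v

/-- The zone `ZN` of `G`. -/
def ZN (G : MPGame V) : V → Prop := G.ZNr Set.univ

/-- The zone `ZP` of `G`. -/
def ZP (G : MPGame V) : V → Prop := G.ZPr Set.univ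

/-- The subgame of `G` induced on `D` is reduced: from every vertex of `ZN`,
Min can force that the first edge visited has weight `≤ 0` and leads into
`ZN`, and symmetrically for `ZP` and Max. -/
def ReducedOn (G : MPGame V) (D : Set V) : Prop :=
  (∀ v, G.ZNr D v →
     (G.IsMin v → ∃ v' ∈ D, G.E v v' ∧ G.w v v' ≤ 0 ∧ G.ZNr D v') ∧
     (¬ G.IsMin v → ∀ v' ∈ D, G.E v v' → G.w v v' ≤ 0 ∧ G.ZNr D v')) ∧
  (∀ v, G.ZPr D v →
     (¬ G.IsMin v → ∃ v' ∈ D, G.E v v' ∧ 0 ≤ G.w v v' ∧ G.ZPr D v') ∧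
     (G.IsMin v → ∀ v' ∈ D, G.E v v' → 0 ≤ G.w v v' ∧ G.ZPr D v'))

/-- `G` is reduced. -/
def Reduced (G : MPGame V) : Prop := G.ReducedOn Set.univ

/-- The subgame of `G` induced on `D` is positively reduced: `ZN = ∅`. -/
def PosReducedOn (G : MPGame V) (D : Set V) : Prop := ∀ v, ¬ G.ZNr D v

/-- `A` is a trap for Min: a sinkless subgraph from which Min cannot escape. -/
def TrapForMin (G : MPGame V) (A : Set V) : Prop :=
  (∀ v ∈ A, ∃ v' ∈ A, G.E v v') ∧
  ∀ v ∈ A, G.IsMin v → ∀ v', G.E v v' → v' ∈ A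

/-- `A` is a trap for Max: a sinkless subgraph from which Max cannot escape. -/
def TrapForMax (G : MPGame V) (A : Set V) : Prop :=
  (∀ v ∈ A, ∃ v' ∈ A, G.E v v') ∧
  ∀ v ∈ A, ¬ G.IsMin v → ∀ v', G.E v v' → v' ∈ A

/-- The potential reduction of `G` by the potential `φ`. -/
def pot (G : MPGame V) (φ : V → ℤ) : MPGame V where
  E := G.E
  w := fun v v' => G.w v v' + φ v' - φ v
  IsMin := G.IsMin
  sinkless := G.sinkless

end MPGame


/-!
Write `val` for the `supΣ^N`-value and `H⁻` for `ZN_{φ_H}`.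

Upper bound: `Φ = min(val, m + φ_H)`, with the second term read as `⊤` off `H⁻`, satisfies the
Bellman inequalities of `supΣ^N` outside `N`. Inside `H⁻`, reducedness lets Min stay in `H⁻`
along edges of modified weight `≤ 0` and forces the same on Max, except for escapes to `F`,
which are worth at most `m`. `Φ` is nonnegative: a vertex of `H⁻` with `m + φ_H < 0` would start
a walk along edges of weight `≥ 0` and modified weight `≤ 0`, and the first cycle it closes would
have weight zero. A nonnegative function with these inequalities bounds `val` from above.

Lower bound: against any Min strategy, the play under Max's strategy either stays in `H⁻` along
edges of modified weight `≥ 0`, so that its partial sums are unbounded (every cycle it closes is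
positive), or leaves through a good escape into a vertex `v'` of value `g v'` after collecting
at least `m + φ_H v - g v'`.
-/

lemma EReal.coe_add_iSup_le {ι : Sort*} {c : ℝ} {f : ι → EReal} {x : EReal}
    (h : ∀ i, (c : EReal) + f i ≤ x) : (c : EReal) + ⨆ i, f i ≤ x := by
  rw [add_comm, ← EReal.le_sub_iff_add_le (.inl (EReal.coe_ne_bot c)) (.inl (EReal.coe_ne_top c))]
  exact iSup_le fun i => (EReal.le_sub_iff_add_le (.inl (EReal.coe_ne_bot c))
    (.inl (EReal.coe_ne_top c))).2 (by rw [add_comm]; exact h i)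

lemma forall_or_exists_exit {Q A B : ℕ → Prop} (h0 : Q 0)
    (h : ∀ i, (∀ j ≤ i, Q j) → (Q (i + 1) ∧ A i) ∨ B i) :
    (∀ i, Q i ∧ A i) ∨ ∃ i, (∀ j ≤ i, Q j) ∧ (∀ j < i, A j) ∧ B i := by
  classical
  by_cases hB : ∃ i, (∀ j ≤ i, Q j) ∧ B i
  · refine .inr ⟨Nat.find hB, (Nat.find_spec hB).1, fun j hj => ?_, (Nat.find_spec hB).2⟩
    have hQ : ∀ k ≤ j, Q k := fun k hk => (Nat.find_spec hB).1 k (by omega)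
    exact ((h j hQ).resolve_right fun hBj => Nat.find_min hB hj ⟨hQ, hBj⟩).2
  · simp only [not_exists, not_and] at hB
    have hQ : ∀ i, ∀ j ≤ i, Q j := by
      intro i
      induction i with
      | zero => intro j hj; rwa [Nat.le_zero.mp hj]
      | succ i ih =>
        intro j hj
        rcases Nat.of_le_succ hj with hj | rfl
        · exact ih j hj
        · exact ((h i ih).resolve_right (hB i ih)).1
    exact .inl fun i => ⟨hQ i i le_rfl, ((h i (hQ i)).resolve_right (hB i (hQ i))).2⟩

namespace MPGame

variable {V : Type*} {G : MPGame V}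

namespace Path

lemma exists_of_forall_exists {S : Set V} {R : V → V → Prop}
    (h : ∀ z ∈ S, ∃ z', G.E z z' ∧ z' ∈ S ∧ R z z') {z₀ : V} (hz₀ : z₀ ∈ S) :
    ∃ π : G.Path, π.vert 0 = z₀ ∧ ∀ n, π.vert n ∈ S ∧ R (π.vert n) (π.vert (n + 1)) := by
  choose f hfE hfS hfR using h
  let s : ℕ → S := fun n => Nat.rec (motive := fun _ => S) ⟨z₀, hz₀⟩
    (fun _ z => ⟨f z z.2, hfS z z.2⟩) n
  exact ⟨⟨fun n => s n, fun n => hfE _ (s n).2⟩, rfl, fun n => ⟨(s n).2, hfR _ (s n).2⟩⟩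

lemma exists_vert_one {u u' : V} (h : G.E u u') :
    ∃ π : G.Path, π.vert 0 = u ∧ π.vert 1 = u' := by
  obtain ⟨π, hπ0, hπ⟩ := exists_of_forall_exists (G := G) (S := Set.univ)
    (R := fun z z' => z = u → z' = u')
    (fun z _ => by
      by_cases hz : z = u
      · exact ⟨u', hz ▸ h, trivial, fun _ => rfl⟩
      · obtain ⟨z', hz'⟩ := G.sinkless z
        exact ⟨z', hz', trivial, fun h' => absurd h' hz⟩)
    (Set.mem_univ u)
  exact ⟨π, hπ0, (hπ 0).2 hπ0⟩

lemma exists_consMin_consMax {σ τ : V → V} (hσ : G.Legal σ) (hτ : G.Legal τ) (v : V) :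
    ∃ π : G.Path, π.vert 0 = v ∧ π.ConsMin σ ∧ π.ConsMax τ := by
  classical
  obtain ⟨π, hπ0, hπ⟩ := exists_of_forall_exists (G := G) (S := Set.univ)
    (R := fun u u' => (G.IsMin u → u' = σ u) ∧ (¬ G.IsMin u → u' = τ u))
    (fun u _ => if hu : G.IsMin u then ⟨σ u, hσ u, trivial, fun _ => rfl, absurd hu⟩
      else ⟨τ u, hτ u, trivial, (absurd · hu), fun _ => rfl⟩)
    (Set.mem_univ v)
  exact ⟨π, hπ0, fun i => (hπ i).2.1, fun i => (hπ i).2.2⟩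

@[simp] lemma wsum_zero (π : G.Path) : π.wsum 0 = 0 := by
  simp [wsum]

lemma wsum_succ (π : G.Path) (k : ℕ) :
    π.wsum (k + 1) = π.wsum k + G.w (π.vert k) (π.vert (k + 1)) :=
  Finset.sum_range_succ _ _

lemma wsum_mono (π : G.Path) (hw : ∀ t, 0 ≤ G.w (π.vert t) (π.vert (t + 1))) :
    Monotone π.wsum :=
  monotone_nat_of_le_succ fun k => by rw [wsum_succ]; linarith [hw k]

lemma sum_pot_w_Ico (π : G.Path) (φ : V → ℤ) {i j : ℕ} (hij : i ≤ j) :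
    ∑ t ∈ Finset.Ico i j, (G.pot φ).w (π.vert t) (π.vert (t + 1)) =
      π.wsum j - π.wsum i + φ (π.vert j) - φ (π.vert i) := by
  induction j, hij using Nat.le_induction with
  | base => simp
  | succ j hij ih =>
    rw [Finset.sum_Ico_succ_top hij, ih, wsum_succ]
    simp only [pot]
    ring

def append (π ρ : G.Path) (n : ℕ) (h : ρ.vert 0 = π.vert n) : G.Path where
  vert k := if k < n then π.vert k else ρ.vert (k - n)
  adj i := by
    by_cases h1 : i + 1 < n
    · simpa [h1, show i < n by omega] using π.adj i
    by_cases h2 : i < n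
    · simpa [h1, h2, show i + 1 - n = 0 by omega, h, show i + 1 = n by omega] using π.adj i
    · simpa [h1, h2, show i + 1 - n = i - n + 1 by omega] using ρ.adj (i - n)

variable {π ρ : G.Path} {n : ℕ} {h : ρ.vert 0 = π.vert n}

lemma append_vert_of_le {k : ℕ} (hk : k ≤ n) : (π.append ρ n h).vert k = π.vert k := by
  rcases hk.lt_or_eq with hk | rfl
  · exact if_pos hk
  · simp [append, h]

lemma append_vert_add (k : ℕ) : (π.append ρ n h).vert (n + k) = ρ.vert k := by
  simp [append]

lemma wsum_append (k : ℕ) : (π.append ρ n h).wsum (n + k) = π.wsum n + ρ.wsum k := by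
  rw [wsum, Finset.sum_range_add]
  congr 1
  · exact Finset.sum_congr rfl fun i hi => by
      rw [append_vert_of_le (Finset.mem_range.mp hi).le,
        append_vert_of_le (Finset.mem_range.mp hi)]
  · exact Finset.sum_congr rfl fun i _ => by
      rw [append_vert_add, add_assoc, append_vert_add]

lemma consMin_append {σ : V → V}
    (hπ : ∀ t < n, G.IsMin (π.vert t) → π.vert (t + 1) = σ (π.vert t)) (hρ : ρ.ConsMin σ) :
    (π.append ρ n h).ConsMin σ := by
  intro t ht
  rcases lt_or_ge t n with htn | htn
  · rw [append_vert_of_le htn.le] at ht ⊢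
    rw [append_vert_of_le htn, hπ t htn ht]
  · obtain ⟨k, rfl⟩ := Nat.exists_eq_add_of_le htn
    rw [append_vert_add] at ht ⊢
    rw [add_assoc, append_vert_add, hρ k ht]

end Path

lemma le_supSigma {X : Set V} (π : G.Path) {k : ℕ} (hk : ∀ i < k, π.vert i ∉ X) :
    ((π.wsum k : ℝ) : EReal) ≤ supSigma X π :=
  le_iSup (fun k : {k : ℕ // ∀ i < k, π.vert i ∉ X} => ((π.wsum k.1 : ℝ) : EReal)) ⟨k, hk⟩

lemma supSigma_nonneg {X : Set V} (π : G.Path) : 0 ≤ supSigma X π := by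
  simpa using le_supSigma (X := X) π (k := 0) (by simp)

lemma wsum_add_supSigma_le_supSigma_append {X : Set V} {π ρ : G.Path} {n : ℕ}
    (h : ρ.vert 0 = π.vert n) (hX : ∀ t < n, π.vert t ∉ X) :
    ((π.wsum n : ℝ) : EReal) + supSigma X ρ ≤ supSigma X (π.append ρ n h) := by
  refine EReal.coe_add_iSup_le fun k => ?_
  rw [← EReal.coe_add, ← Int.cast_add, ← Path.wsum_append]
  refine le_supSigma _ fun t ht => ?_
  rcases lt_or_ge t n with htn | htn
  · rw [Path.append_vert_of_le htn.le]
    exact hX t htn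
  · obtain ⟨s, rfl⟩ := Nat.exists_eq_add_of_le htn
    rw [Path.append_vert_add]
    exact k.2 s (by omega)

noncomputable def stratSupSigma (G : MPGame V) (X : Set V) (σ : V → V) (z : V) : EReal :=
  ⨆ π : {π : G.Path // π.vert 0 = z ∧ π.ConsMin σ}, supSigma X π.1

lemma supSigmaVal_le_stratSupSigma (X : Set V) {σ : V → V} (hσ : G.Legal σ) (z : V) :
    G.supSigmaVal X z ≤ G.stratSupSigma X σ z :=
  iInf_le (fun σ : {σ : V → V // G.Legal σ} => G.stratSupSigma X σ.1 z) ⟨σ, hσ⟩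

lemma stratSupSigma_nonneg (X : Set V) {σ : V → V} (hσ : G.Legal σ) (z : V) :
    0 ≤ G.stratSupSigma X σ z := by
  obtain ⟨π, hπ0, hπ, -⟩ := Path.exists_consMin_consMax hσ hσ z
  exact le_iSup_of_le ⟨π, hπ0, hπ⟩ (supSigma_nonneg π)

lemma supSigmaVal_nonneg (X : Set V) (z : V) : 0 ≤ G.supSigmaVal X z :=
  le_iInf fun σ => stratSupSigma_nonneg X σ.2 z

lemma wsum_add_stratSupSigma_le {X : Set V} {σ : V → V} (π : G.Path) (n : ℕ)
    (hσ : ∀ t < n, G.IsMin (π.vert t) → π.vert (t + 1) = σ (π.vert t))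
    (hX : ∀ t < n, π.vert t ∉ X) :
    ((π.wsum n : ℝ) : EReal) + G.stratSupSigma X σ (π.vert n) ≤
      G.stratSupSigma X σ (π.vert 0) := by
  refine EReal.coe_add_iSup_le fun ρ => ?_
  have hρ : ρ.1.vert 0 = π.vert n := ρ.2.1
  refine (wsum_add_supSigma_le_supSigma_append hρ hX).trans (le_iSup_of_le ⟨π.append ρ.1 n hρ,
    Path.append_vert_of_le (Nat.zero_le n), Path.consMin_append hσ ρ.2.2⟩ le_rfl)

lemma w_add_stratSupSigma_le {X : Set V} {σ : V → V} {z z' : V} (hz : z ∉ X)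
    (he : G.E z z') (hσ : G.IsMin z → z' = σ z) :
    ((G.w z z' : ℝ) : EReal) + G.stratSupSigma X σ z' ≤ G.stratSupSigma X σ z := by
  obtain ⟨π, hπ0, hπ1⟩ := Path.exists_vert_one he
  have := wsum_add_stratSupSigma_le (X := X) (σ := σ) π 1
    (fun t ht => by simpa [Nat.lt_one_iff.mp ht, hπ0, hπ1] using hσ)
    (fun t ht => by simpa [Nat.lt_one_iff.mp ht, hπ0] using hz)
  simpa [Path.wsum, hπ0, hπ1] using this

lemma le_supSigmaVal_of_forall_exists {X : Set V} {v : V} {c : EReal}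
    (h : ∀ σ, G.Legal σ → ∃ (π : G.Path) (n : ℕ), π.vert 0 = v ∧ π.ConsMin σ ∧
      (∀ t < n, π.vert t ∉ X) ∧ c ≤ ((π.wsum n : ℝ) : EReal) + G.supSigmaVal X (π.vert n)) :
    c ≤ G.supSigmaVal X v := by
  refine le_iInf fun σ => ?_
  obtain ⟨π, n, rfl, hσ, hX, hc⟩ := h σ.1 σ.2
  calc c ≤ ((π.wsum n : ℝ) : EReal) + G.supSigmaVal X (π.vert n) := hc
    _ ≤ ((π.wsum n : ℝ) : EReal) + G.stratSupSigma X σ.1 (π.vert n) :=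
      add_le_add_right (supSigmaVal_le_stratSupSigma X σ.2 _) _
    _ ≤ G.stratSupSigma X σ.1 (π.vert 0) :=
      wsum_add_stratSupSigma_le π n (fun t _ => hσ t) hX

/-- `Φ` bounds its own one-step Bellman update for `supΣ^X` at every vertex outside `X`. -/
def IsSupersolution (G : MPGame V) (X : Set V) (Φ : V → EReal) : Prop :=
  (∀ z ∉ X, ¬ G.IsMin z → ∀ z', G.E z z' → ((G.w z z' : ℝ) : EReal) + Φ z' ≤ Φ z) ∧
  (∀ z ∉ X, G.IsMin z → ∃ z', G.E z z' ∧ ((G.w z z' : ℝ) : EReal) + Φ z' ≤ Φ z)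

lemma isSupersolution_supSigmaVal [Finite V] (X : Set V) :
    G.IsSupersolution X (G.supSigmaVal X) := by
  refine ⟨fun z hz hmax z' he => ?_, fun z hz hmin => ?_⟩
  · refine le_iInf fun σ => ?_
    exact (add_le_add_right (supSigmaVal_le_stratSupSigma X σ.2 z') _).trans
      (w_add_stratSupSigma_le hz he fun h => absurd h hmax)
  · have := Fintype.ofFinite V
    classical
    obtain ⟨z', hz', hmin'⟩ := Finset.exists_min_image
      (Finset.univ.filter fun z' => G.E z z')
      (fun z' => ((G.w z z' : ℝ) : EReal) + G.supSigmaVal X z')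
      (by obtain ⟨z', he⟩ := G.sinkless z; exact ⟨z', by simpa using he⟩)
    refine ⟨z', by simpa using hz', le_iInf fun σ => ?_⟩
    calc ((G.w z z' : ℝ) : EReal) + G.supSigmaVal X z'
        ≤ ((G.w z (σ.1 z) : ℝ) : EReal) + G.supSigmaVal X (σ.1 z) :=
          hmin' _ (by simpa using σ.2 z)
      _ ≤ ((G.w z (σ.1 z) : ℝ) : EReal) + G.stratSupSigma X σ.1 (σ.1 z) :=
          add_le_add_right (supSigmaVal_le_stratSupSigma X σ.2 _) _
      _ ≤ G.stratSupSigma X σ.1 z := w_add_stratSupSigma_le hz (σ.2 z) fun _ => rfl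

lemma wsum_add_le_of_forall_lt {Φ : V → EReal} (π : G.Path) (k : ℕ)
    (h : ∀ t < k, ((G.w (π.vert t) (π.vert (t + 1)) : ℝ) : EReal) + Φ (π.vert (t + 1)) ≤
      Φ (π.vert t)) :
    ((π.wsum k : ℝ) : EReal) + Φ (π.vert k) ≤ Φ (π.vert 0) := by
  induction k with
  | zero => simp
  | succ k ih =>
    calc ((π.wsum (k + 1) : ℝ) : EReal) + Φ (π.vert (k + 1))
        = ((π.wsum k : ℝ) : EReal) +
            (((G.w (π.vert k) (π.vert (k + 1)) : ℝ) : EReal) + Φ (π.vert (k + 1))) := by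
          rw [Path.wsum_succ, Int.cast_add, EReal.coe_add, add_assoc]
      _ ≤ ((π.wsum k : ℝ) : EReal) + Φ (π.vert k) := add_le_add_right (h k (by omega)) _
      _ ≤ Φ (π.vert 0) := ih fun t ht => h t (by omega)

lemma supSigmaVal_le_of_isSupersolution {X : Set V} {Φ : V → EReal}
    (hΦ : G.IsSupersolution X Φ) (hΦ0 : ∀ z, 0 ≤ Φ z) (z : V) : G.supSigmaVal X z ≤ Φ z := by
  have hσ : ∀ u, ∃ u', G.E u u' ∧
      (u ∉ X → G.IsMin u → ((G.w u u' : ℝ) : EReal) + Φ u' ≤ Φ u) := by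
    intro u
    by_cases hu : u ∉ X ∧ G.IsMin u
    · obtain ⟨u', he, hle⟩ := hΦ.2 u hu.1 hu.2
      exact ⟨u', he, fun _ _ => hle⟩
    · obtain ⟨u', he⟩ := G.sinkless u
      exact ⟨u', he, fun h1 h2 => absurd ⟨h1, h2⟩ hu⟩
  choose σ hσE hσΦ using hσ
  refine (supSigmaVal_le_stratSupSigma X hσE z).trans (iSup_le fun π => iSup_le fun k => ?_)
  have hstep : ∀ t < k.1, ((G.w (π.1.vert t) (π.1.vert (t + 1)) : ℝ) : EReal) +
      Φ (π.1.vert (t + 1)) ≤ Φ (π.1.vert t) := by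
    intro t ht
    by_cases hmin : G.IsMin (π.1.vert t)
    · rw [π.2.2 t hmin]
      exact hσΦ _ (k.2 t ht) hmin
    · exact hΦ.1 _ (k.2 t ht) hmin _ (π.1.adj t)
  calc ((π.1.wsum k.1 : ℝ) : EReal) ≤ ((π.1.wsum k.1 : ℝ) : EReal) + Φ (π.1.vert k.1) :=
        le_add_of_nonneg_right (hΦ0 _)
    _ ≤ Φ (π.1.vert 0) := wsum_add_le_of_forall_lt π.1 k.1 hstep
    _ = Φ z := by rw [π.2.1]

lemma ZNr.mem {D : Set V} {v : V} (h : G.ZNr D v) : v ∈ D := by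
  cases h <;> assumption

lemma w_nonneg_of_notMem_Nset {u u' : V} (hu : u ∉ G.Nset) (hmin : G.IsMin u)
    (he : G.E u u') : 0 ≤ G.w u u' := by
  by_contra hw
  exact hu ⟨trivial, .inl ⟨hmin, u', trivial, he, by omega⟩⟩

lemma exists_w_nonneg_of_notMem_Nset {u : V} (hu : u ∉ G.Nset) (hmax : ¬ G.IsMin u) :
    ∃ u', G.E u u' ∧ 0 ≤ G.w u u' := by
  by_contra! h
  exact hu ⟨trivial, .inr ⟨hmax, fun u' _ he => h u' he⟩⟩

namespace NoZeroCycle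

lemma wsum_lt_of_pot_nonneg (hz : G.NoZeroCycle) {π : G.Path} {φ : V → ℤ} {i j : ℕ}
    (hij : i < j) (hv : π.vert i = π.vert j)
    (hφ : ∀ t, 0 ≤ (G.pot φ).w (π.vert t) (π.vert (t + 1))) : π.wsum i < π.wsum j := by
  have h := Finset.sum_nonneg (s := Finset.Ico i j) fun t _ => hφ t
  rw [Path.sum_pot_w_Ico π φ hij.le, hv] at h
  exact lt_of_le_of_ne (by linarith) (hz π i j hij hv)

lemma exists_le_wsum [Finite V] (hz : G.NoZeroCycle) {π : G.Path} {φ : V → ℤ}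
    (hφ : ∀ t, 0 ≤ (G.pot φ).w (π.vert t) (π.vert (t + 1))) (c : ℤ) :
    ∃ k, c ≤ π.wsum k := by
  obtain ⟨u, hu⟩ := Finite.exists_infinite_fiber π.vert
  have hinf : (π.vert ⁻¹' {u}).Infinite := Set.infinite_coe_iff.mp hu
  obtain ⟨k₀, hk₀⟩ := hinf.nonempty
  have grow : ∀ d : ℕ, ∃ k ∈ π.vert ⁻¹' {u}, π.wsum k₀ + d ≤ π.wsum k := by
    intro d
    induction d with
    | zero => exact ⟨k₀, hk₀, by simp⟩
    | succ d ih =>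
      obtain ⟨k, hk, hkd⟩ := ih
      obtain ⟨k', hk', hkk'⟩ := hinf.exists_gt k
      have hv : π.vert k = π.vert k' := (hk : π.vert k = u).trans (hk' : π.vert k' = u).symm
      have := hz.wsum_lt_of_pot_nonneg hkk' hv hφ
      exact ⟨k', hk', by push_cast; omega⟩
  obtain ⟨k, -, hk⟩ := grow (c - π.wsum k₀).toNat
  exact ⟨k, by omega⟩

end NoZeroCycle

section ReducedZone

variable {F : Set V} {φ : V → ℤ} {g : V → ℤ} {m : ℤ}

lemma zero_le_add_of_ZNr [Finite V] (hz : G.NoZeroCycle) (hNF : G.Nset ⊆ F)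
    (hg : ∀ u ∈ F, 0 ≤ g u) (hred : (G.pot φ).ReducedOn Fᶜ)
    (hm : ∀ u u', (G.pot φ).ZNr Fᶜ u → ¬ G.IsMin u → G.E u u' → u' ∈ F →
      G.w u u' + g u' - φ u ≤ m)
    {z : V} (hzQ : (G.pot φ).ZNr Fᶜ z) : 0 ≤ m + φ z := by
  by_contra! hneg
  let S : Set V := {u | (G.pot φ).ZNr Fᶜ u ∧ m + φ u < 0}
  have hstep : ∀ u ∈ S, ∃ u', G.E u u' ∧ u' ∈ S ∧ (0 ≤ G.w u u' ∧ (G.pot φ).w u u' ≤ 0) := by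
    rintro u ⟨huQ, hum⟩
    have huN : u ∉ G.Nset := fun h => huQ.mem (hNF h)
    by_cases hmin : G.IsMin u
    · obtain ⟨u', -, he, hle, hu'Q⟩ := (hred.1 u huQ).1 hmin
      have hw := w_nonneg_of_notMem_Nset huN hmin he
      refine ⟨u', he, ⟨hu'Q, ?_⟩, hw, hle⟩
      simp only [pot] at hle
      omega
    · obtain ⟨u', he, hw⟩ := exists_w_nonneg_of_notMem_Nset huN hmin
      have hu'F : u' ∈ Fᶜ := fun hu'F => by
        linarith [hm u u' huQ hmin he hu'F, hg u' hu'F]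
      obtain ⟨hle, hu'Q⟩ := (hred.1 u huQ).2 hmin u' hu'F he
      refine ⟨u', he, ⟨hu'Q, ?_⟩, hw, hle⟩
      simp only [pot] at hle
      omega
  obtain ⟨π, -, hπ⟩ := Path.exists_of_forall_exists hstep ⟨hzQ, hneg⟩
  obtain ⟨i, j, hne, hv⟩ := Finite.exists_ne_map_eq_of_infinite π.vert
  wlog hij : i < j generalizing i j
  · exact this j i hne.symm hv.symm (hne.lt_or_gt.resolve_left hij)
  have hpot := Finset.sum_nonpos (s := Finset.Ico i j) fun t _ => (hπ t).2.2
  rw [Path.sum_pot_w_Ico π φ hij.le, hv] at hpot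
  have hmono := π.wsum_mono (fun t => (hπ t).2.1) hij.le
  exact hz π i j hij hv (by linarith)

open scoped Classical in
lemma isSupersolution_min_supSigmaVal [Finite V]
    (hg : ∀ u ∈ F, G.supSigmaVal G.Nset u = ((g u : ℝ) : EReal))
    (hred : (G.pot φ).ReducedOn Fᶜ)
    (hm : ∀ u u', (G.pot φ).ZNr Fᶜ u → ¬ G.IsMin u → G.E u u' → u' ∈ F →
      G.w u u' + g u' - φ u ≤ m) :
    G.IsSupersolution G.Nset fun z => min (G.supSigmaVal G.Nset z)
      (if (G.pot φ).ZNr Fᶜ z then (((m + φ z : ℤ) : ℝ) : EReal) else ⊤) := by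
  set ψ : V → EReal := fun z => if (G.pot φ).ZNr Fᶜ z then (((m + φ z : ℤ) : ℝ) : EReal) else ⊤
  have hval := isSupersolution_supSigmaVal (G := G) G.Nset
  have hstay : ∀ {z z'}, (G.pot φ).ZNr Fᶜ z → (G.pot φ).ZNr Fᶜ z' → (G.pot φ).w z z' ≤ 0 →
      ((G.w z z' : ℝ) : EReal) + min (G.supSigmaVal G.Nset z') (ψ z') ≤ ψ z := by
    intro z z' hzQ hz'Q hle
    simp only [ψ, if_pos hz'Q, if_pos hzQ]
    refine (add_le_add_right (min_le_right _ _) _).trans ?_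
    simp only [pot] at hle
    exact_mod_cast (by omega : G.w z z' + (m + φ z') ≤ m + φ z)
  refine ⟨fun z hzN hmax z' he => le_min ?_ ?_, fun z hzN hmin => ?_⟩
  · exact (add_le_add_right (min_le_left _ _) _).trans (hval.1 z hzN hmax z' he)
  · by_cases hzQ : (G.pot φ).ZNr Fᶜ z
    · by_cases hz'F : z' ∈ F
      · refine (add_le_add_right (min_le_left _ _) _).trans ?_
        simp only [if_pos hzQ, hg z' hz'F]
        exact_mod_cast (by linarith [hm z z' hzQ hmax he hz'F] : G.w z z' + g z' ≤ m + φ z)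
      · obtain ⟨hle, hz'Q⟩ := (hred.1 z hzQ).2 hmax z' hz'F he
        exact hstay hzQ hz'Q hle
    · simp [hzQ]
  · by_cases hlt : ψ z < G.supSigmaVal G.Nset z
    · have hzQ : (G.pot φ).ZNr Fᶜ z := by
        by_contra hzQ
        simp [ψ, hzQ] at hlt
      obtain ⟨z', -, he, hle, hz'Q⟩ := (hred.1 z hzQ).1 hmin
      exact ⟨z', he, (hstay hzQ hz'Q hle).trans_eq (min_eq_right hlt.le).symm⟩
    · obtain ⟨z', he, hle⟩ := hval.2 z hzN hmin
      exact ⟨z', he, (add_le_add_right (min_le_left _ _) _).trans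
        (hle.trans_eq (min_eq_left (not_lt.mp hlt)).symm)⟩

lemma exists_le_wsum_add_supSigmaVal [Finite V] (hz : G.NoZeroCycle) (hNF : G.Nset ⊆ F)
    (hg : ∀ u ∈ F, G.supSigmaVal G.Nset u = ((g u : ℝ) : EReal)) {π : G.Path}
    (hπ0 : (G.pot φ).ZNr Fᶜ (π.vert 0))
    (hπ : ∀ i, (∀ j ≤ i, (G.pot φ).ZNr Fᶜ (π.vert j)) →
      ((G.pot φ).ZNr Fᶜ (π.vert (i + 1)) ∧ 0 ≤ (G.pot φ).w (π.vert i) (π.vert (i + 1))) ∨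
      (π.vert (i + 1) ∈ F ∧
        m ≤ G.w (π.vert i) (π.vert (i + 1)) + g (π.vert (i + 1)) - φ (π.vert i))) :
    ∃ n, (∀ t < n, π.vert t ∉ G.Nset) ∧ (((m + φ (π.vert 0) : ℤ) : ℝ) : EReal) ≤
      ((π.wsum n : ℝ) : EReal) + G.supSigmaVal G.Nset (π.vert n) := by
  have hN : ∀ {u}, (G.pot φ).ZNr Fᶜ u → u ∉ G.Nset := fun hu hN => hu.mem (hNF hN)
  rcases forall_or_exists_exit (Q := fun i => (G.pot φ).ZNr Fᶜ (π.vert i)) hπ0 hπ with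
    hstay | ⟨i, hQ, hA, hF, hm⟩
  · obtain ⟨n, hn⟩ := hz.exists_le_wsum (fun t => (hstay t).2) (m + φ (π.vert 0))
    refine ⟨n, fun t _ => hN (hstay t).1, ?_⟩
    calc (((m + φ (π.vert 0) : ℤ) : ℝ) : EReal) ≤ ((π.wsum n : ℝ) : EReal) := by
          exact_mod_cast hn
      _ ≤ _ := le_add_of_nonneg_right (supSigmaVal_nonneg _ _)
  · refine ⟨i + 1, fun t ht => hN (hQ t (by omega)), ?_⟩
    have hpre := Finset.sum_nonneg (s := Finset.Ico 0 i) fun t ht => hA t (Finset.mem_Ico.mp ht).2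
    rw [Path.sum_pot_w_Ico π φ (Nat.zero_le i), Path.wsum_zero] at hpre
    rw [hg _ hF, Path.wsum_succ]
    exact_mod_cast (by linarith :
      m + φ (π.vert 0) ≤ π.wsum i + G.w (π.vert i) (π.vert (i + 1)) + g (π.vert (i + 1)))

end ReducedZone

end MPGame

open MPGame in
theorem statement16_general {V : Type*} [Fintype V] (G : MPGame V)
    (hz : G.NoZeroCycle)
    (F : Set V) (hNF : G.Nset ⊆ F)
    (g : V → ℤ) (hg : ∀ u ∈ F, G.supSigmaVal G.Nset u = ((g u : ℝ) : EReal))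
    (φH : V → ℤ) (hred : (G.pot φH).ReducedOn Fᶜ)
    (m : ℤ)
    (hmub : ∀ u u', (G.pot φH).ZNr Fᶜ u → ¬ G.IsMin u → G.E u u' → u' ∈ F →
      G.w u u' + g u' - φH u ≤ m)
    (v : V) (hv : (G.pot φH).ZNr Fᶜ v)
    (τ : V → V) (hτ : G.Legal τ)
    (hens : ∀ π : G.Path, π.vert 0 = v → π.ConsMax τ →
      ∀ i, (∀ j ≤ i, (G.pot φH).ZNr Fᶜ (π.vert j)) →
        (((G.pot φH).ZNr Fᶜ (π.vert (i + 1)) ∧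
            0 ≤ G.w (π.vert i) (π.vert (i + 1)) +
              φH (π.vert (i + 1)) - φH (π.vert i)) ∨
         (π.vert (i + 1) ∈ F ∧
            m ≤ G.w (π.vert i) (π.vert (i + 1)) +
              g (π.vert (i + 1)) - φH (π.vert i)))) :
    G.supSigmaVal G.Nset v = ((m + φH v : ℝ) : EReal) := by
  have hg0 : ∀ u ∈ F, 0 ≤ g u := fun u hu => by
    simpa [hg u hu] using supSigmaVal_nonneg (G := G) G.Nset u
  have upper : G.supSigmaVal G.Nset v ≤ (((m + φH v : ℤ) : ℝ) : EReal) := by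
    refine (supSigmaVal_le_of_isSupersolution (isSupersolution_min_supSigmaVal hg hred hmub)
      (fun z => le_min (supSigmaVal_nonneg _ z) ?_) v).trans ?_
    · split_ifs with hzQ
      · exact_mod_cast zero_le_add_of_ZNr hz hNF hg0 hred hmub hzQ
      · exact le_top
    · exact (min_le_right _ _).trans (by simp only [if_pos hv, le_refl])
  have lower : (((m + φH v : ℤ) : ℝ) : EReal) ≤ G.supSigmaVal G.Nset v := by
    refine le_supSigmaVal_of_forall_exists fun σ hσ => ?_
    obtain ⟨π, rfl, hσπ, hτπ⟩ := Path.exists_consMin_consMax hσ hτ v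
    obtain ⟨n, hX, hn⟩ := exists_le_wsum_add_supSigmaVal hz hNF hg hv (hens π rfl hτπ)
    exact ⟨π, n, rfl, hσπ, hX, hn⟩
  push_cast at upper lower
  exact le_antisymm upper lower

open MPGame in
/-- extension of Lemma 3b, fixing many vertices at once:
with `F ⊇ N`, `g` the finite `supΣ^N`-values on `F`, `H = G ∖ F` a subgame
with reducing potential `φ_H`, `H⁺ = ZP_{φ_H}` empty and `H⁻ = ZN_{φ_H}`
nonempty, and `m` the maximum of `w(vv') + supΣ^N(v') − φ_H(v)` over edges
from `H⁻ ∩ V_Max` to `F` (such edges exist): if a vertex `v ∈ H⁻` is such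
that Max has a strategy ensuring, from `v`, that the play visits only edges
of `φ_H`-modified weight `≥ 0` while remaining in `H⁻` and either stays
forever in `H⁻` or exits via a good escape (an edge from `H⁻` to `F` of
value `≥ m`), then `supΣ^N(v) = m + φ_H(v)`. -/
theorem statement16 {V : Type*} [Fintype V] (G : MPGame V)
    (hz : G.NoZeroCycle)
    (F : Set V) (hNF : G.Nset ⊆ F)
    (g : V → ℤ) (hg : ∀ u ∈ F, G.supSigmaVal G.Nset u = ((g u : ℝ) : EReal))
    (hsub : ∀ u ∈ Fᶜ, ∃ u' ∈ Fᶜ, G.E u u')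
    (φH : V → ℤ) (hred : (G.pot φH).ReducedOn Fᶜ)
    (hplus : ∀ u, ¬ (G.pot φH).ZPr Fᶜ u)
    (hminus : ∃ u, (G.pot φH).ZNr Fᶜ u)
    (m : ℤ)
    (hmex : ∃ u u', (G.pot φH).ZNr Fᶜ u ∧ ¬ G.IsMin u ∧ G.E u u' ∧ u' ∈ F ∧
      G.w u u' + g u' - φH u = m)
    (hmub : ∀ u u', (G.pot φH).ZNr Fᶜ u → ¬ G.IsMin u → G.E u u' → u' ∈ F →
      G.w u u' + g u' - φH u ≤ m)
    (v : V) (hv : (G.pot φH).ZNr Fᶜ v)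
    (τ : V → V) (hτ : G.Legal τ)
    (hens : ∀ π : G.Path, π.vert 0 = v → π.ConsMax τ →
      ∀ i, (∀ j ≤ i, (G.pot φH).ZNr Fᶜ (π.vert j)) →
        (((G.pot φH).ZNr Fᶜ (π.vert (i + 1)) ∧
            0 ≤ G.w (π.vert i) (π.vert (i + 1)) +
              φH (π.vert (i + 1)) - φH (π.vert i)) ∨
         (π.vert (i + 1) ∈ F ∧
            m ≤ G.w (π.vert i) (π.vert (i + 1)) +
              g (π.vert (i + 1)) - φH (π.vert i)))) :
    G.supSigmaVal G.Nset v = ((m + φH v : ℝ) : EReal) :=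
  statement16_general G hz F hNF g hg φH hred m hmub v hv τ hτ hens
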